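/- arXiv:2505.07006 — 3 statements merged into one kernel-verified Lean document; each statement's English description precedes it below -/
import Mathlib

section
/- Let G be a Lie group, β an element of its Lie algebra, and define G^{β−} = {g ∈ G : lim_{t→+∞} exp(tβ) g exp(−tβ) exists} and R^{β−} = {g ∈ G : lim_{t→+∞} exp(tβ) g exp(−tβ) = e}. Then G^{β−} is a subgroup of G and R^{β−} is a normal subgroup of G^{β−}. -/
open Filter Topology

/-- For a one-parameter subgroup `φ` of a topological group `G`, the set
`G^{β-}` of elements whose conjugates `φ(t) g φ(t)⁻¹` converge as `t → +∞` is a subgroup,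
and the set `R^{β-}` of elements whose conjugates converge to the identity is a normal
subgroup of `G^{β-}`. -/
theorem stmt6 {G : Type*} [Group G] [TopologicalSpace G] [IsTopologicalGroup G] [T2Space G]
    (φ : ℝ → G) (hφ0 : φ 0 = 1) (hφadd : ∀ s t : ℝ, φ (s + t) = φ s * φ t)
    (hφcont : Continuous φ) :
    ∃ H N : Subgroup G,
      (H : Set G) = {g : G | ∃ l : G, Tendsto (fun t : ℝ => φ t * g * (φ t)⁻¹) atTop (𝓝 l)} ∧
      (N : Set G) = {g : G | Tendsto (fun t : ℝ => φ t * g * (φ t)⁻¹) atTop (𝓝 1)} ∧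
      N ≤ H ∧ ∀ g ∈ H, ∀ n ∈ N, g * n * g⁻¹ ∈ N := by
  have hmul : ∀ (g h : G) (t : ℝ),
      φ t * (g * h) * (φ t)⁻¹ = (φ t * g * (φ t)⁻¹) * (φ t * h * (φ t)⁻¹) := by
    intro g h t; group
  have hinv : ∀ (g : G) (t : ℝ),
      φ t * g⁻¹ * (φ t)⁻¹ = (φ t * g * (φ t)⁻¹)⁻¹ := by
    intro g t; group
  refine ⟨{ carrier := {g : G | ∃ l : G, Tendsto (fun t : ℝ => φ t * g * (φ t)⁻¹) atTop (𝓝 l)}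
            one_mem' := ⟨1, by simpa using tendsto_const_nhds⟩
            mul_mem' := ?_
            inv_mem' := ?_ },
          { carrier := {g : G | Tendsto (fun t : ℝ => φ t * g * (φ t)⁻¹) atTop (𝓝 1)}
            one_mem' := by simpa using tendsto_const_nhds
            mul_mem' := ?_
            inv_mem' := ?_ }, rfl, rfl, ?_, ?_⟩
  · rintro g h ⟨l, hl⟩ ⟨m, hm⟩
    exact ⟨l * m, by simpa only [hmul] using hl.mul hm⟩
  · rintro g ⟨l, hl⟩
    exact ⟨l⁻¹, by simpa only [hinv] using hl.inv⟩
  · intro g h hg hh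
    show Tendsto (fun t : ℝ => φ t * (g * h) * (φ t)⁻¹) atTop (𝓝 1)
    simpa only [hmul, mul_one] using hg.mul hh
  · intro g hg
    show Tendsto (fun t : ℝ => φ t * g⁻¹ * (φ t)⁻¹) atTop (𝓝 1)
    simpa only [hinv, inv_one] using hg.inv
  · intro g hg
    exact ⟨1, hg⟩
  · rintro g ⟨l, hl⟩ n hn
    have : Tendsto (fun t : ℝ =>
        (φ t * g * (φ t)⁻¹) * (φ t * n * (φ t)⁻¹) * (φ t * g * (φ t)⁻¹)⁻¹)
        atTop (𝓝 (l * 1 * l⁻¹)) := ((hl.mul hn).mul hl.inv)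
    exact (by simpa only [← hmul, ← hinv, mul_one, mul_inv_cancel] using this :
      Tendsto (fun t : ℝ => φ t * (g * n * g⁻¹) * (φ t)⁻¹) atTop (𝓝 1))
end

section
/- Let V = W ⊕ U be an orthogonal direct sum of finite-dimensional complex inner product spaces, w_0 ∈ W a nonzero vector, and suppose a group R acts linearly on V preserving both W and U, such that the map R × (ℙ(ℂw_0 ⊕ A) \ ℙ(A)) → ℙ(W) \ ℙ((ℂw_0)^{⊥_W}), (r, z) ↦ r·z is bijective, where A = (ℂw_0)^{⊥_W} ∩ (Lw_0)^⊥ for a subspace Lw_0 ⊆ W. Then the map R × (ℙ(ℂw_0 ⊕ A ⊕ U) \ ℙ((ℂw_0)^{⊥_V})) → ℙ(V) \ ℙ((ℂw_0)^{⊥_V}), (r, z) ↦ r·z, is also bijective. -/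
open scoped LinearAlgebra.Projectivization InnerProductSpace

/-- Brion–Luna–Vust extension step: if the action map
`R × (ℙ(ℂw₀ ⊕ A) \ ℙ(A)) → ℙ(W) \ ℙ((ℂw₀)^{⊥_W})` is bijective, then so is the extended map
`R × (ℙ(ℂw₀ ⊕ A ⊕ U) \ ℙ((ℂw₀)^{⊥_V})) → ℙ(V) \ ℙ((ℂw₀)^{⊥_V})`, where `V = W ⊕ U` is an
orthogonal decomposition, `U = Wᗮ`, and `R` acts linearly preserving `W` and `U`. -/
theorem stmt14 {V : Type*} [NormedAddCommGroup V] [InnerProductSpace ℂ V]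
    [FiniteDimensional ℂ V]
    (W : Submodule ℂ V) (w₀ : V) (hw₀W : w₀ ∈ W) (hw₀ : w₀ ≠ 0)
    {R : Type*} [Group R] (ρ : R →* (V ≃ₗ[ℂ] V))
    (hρW : ∀ r : R, Submodule.map ((ρ r) : V →ₗ[ℂ] V) W = W)
    (hρU : ∀ r : R, Submodule.map ((ρ r) : V →ₗ[ℂ] V) Wᗮ = Wᗮ)
    (A : Submodule ℂ V) (hA : A ≤ W ⊓ (ℂ ∙ w₀)ᗮ)
    (hbij : ∀ p : ℙ ℂ V,
      (p.submodule ≤ W ∧ ¬ p.submodule ≤ (ℂ ∙ w₀)ᗮ ⊓ W) →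
      ∃! q : R × ℙ ℂ V,
        (q.2.submodule ≤ (ℂ ∙ w₀) ⊔ A ∧ ¬ q.2.submodule ≤ A) ∧
          Projectivization.map ((ρ q.1) : V →ₗ[ℂ] V) (ρ q.1).injective q.2 = p) :
    ∀ p : ℙ ℂ V, ¬ p.submodule ≤ (ℂ ∙ w₀)ᗮ →
      ∃! q : R × ℙ ℂ V,
        (q.2.submodule ≤ (ℂ ∙ w₀) ⊔ A ⊔ Wᗮ ∧ ¬ q.2.submodule ≤ (ℂ ∙ w₀)ᗮ) ∧
          Projectivization.map ((ρ q.1) : V →ₗ[ℂ] V) (ρ q.1).injective q.2 = p := by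
  classical
  intro p hp
  -- basic facts
  have hBW : (ℂ ∙ w₀) ⊔ A ≤ W :=
    sup_le ((Submodule.span_singleton_le_iff_mem _ _).2 hw₀W) (hA.trans inf_le_left)
  have hAperp : A ≤ (ℂ ∙ w₀)ᗮ := hA.trans inf_le_right
  have hperp : ∀ x : V, x ∈ (ℂ ∙ w₀)ᗮ ↔ ⟪w₀, x⟫_ℂ = 0 := fun x =>
    Submodule.mem_orthogonal_singleton_iff_inner_right
  -- for y ∈ ℂ∙w₀ ⊔ A : inner with w₀ vanishes iff y ∈ A
  have key : ∀ y : V, y ∈ (ℂ ∙ w₀) ⊔ A → (⟪w₀, y⟫_ℂ = 0 ↔ y ∈ A) := by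
    intro y hy
    obtain ⟨s, hs, b, hb, rfl⟩ := Submodule.mem_sup.1 hy
    obtain ⟨a, rfl⟩ := Submodule.mem_span_singleton.1 hs
    have hbperp : ⟪w₀, b⟫_ℂ = 0 := (hperp b).1 (hAperp hb)
    constructor
    · intro h
      rw [inner_add_right, hbperp, add_zero, inner_smul_right] at h
      have : a = 0 := by
        rcases mul_eq_zero.1 h with h | h
        · exact h
        · exact absurd h (inner_self_ne_zero.2 hw₀)
      simpa [this] using hb
    · intro h
      exact (hperp _).1 (hAperp h)
  -- symm of ρ r preserves Wᗮ
  have hsymmU : ∀ (r : R) (x : V), x ∈ Wᗮ → (ρ r).symm x ∈ Wᗮ := by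
    intro r x hx
    have : x ∈ Submodule.map ((ρ r) : V →ₗ[ℂ] V) Wᗮ := (hρU r).symm ▸ hx
    obtain ⟨a, ha, rfl⟩ := this
    simpa using ha
  have hmapW : ∀ (r : R) (x : V), x ∈ W → (ρ r) x ∈ W := by
    intro r x hx
    exact (hρW r) ▸ Submodule.mem_map_of_mem hx
  have hmapU : ∀ (r : R) (x : V), x ∈ Wᗮ → (ρ r) x ∈ Wᗮ := by
    intro r x hx
    exact (hρU r) ▸ Submodule.mem_map_of_mem hx
  -- decompose v := p.rep
  set v : V := p.rep with hvdef
  have hvne : v ≠ 0 := p.rep_nonzero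
  have hvinner : ⟪w₀, v⟫_ℂ ≠ 0 := by
    intro h
    exact hp (by
      rw [Projectivization.submodule_eq, Submodule.span_singleton_le_iff_mem]
      exact (hperp v).2 h)
  set w : V := (W.orthogonalProjectionOnto v : V) with hwdef
  have hwW : w ∈ W := (W.orthogonalProjectionOnto v).2
  set u : V := v - w with hudef
  have huU : u ∈ Wᗮ := W.sub_starProjection_mem_orthogonal v
  have hvwu : v = w + u := by simp [hudef]
  have huinner : ⟪w₀, u⟫_ℂ = 0 := huU w₀ hw₀W
  have hwinner : ⟪w₀, w⟫_ℂ ≠ 0 := by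
    intro h
    apply hvinner
    rw [hvwu, inner_add_right, h, huinner, add_zero]
  have hwne : w ≠ 0 := by
    intro h
    apply hwinner
    rw [h, inner_zero_right]
  -- apply the hypothesis on W
  obtain ⟨⟨r, z⟩, ⟨⟨hz1, hz2⟩, hz3⟩, huniq⟩ := hbij (Projectivization.mk ℂ w hwne)
    ⟨by
      rw [Projectivization.submodule_mk, Submodule.span_singleton_le_iff_mem]
      exact hwW,
     by
      rw [Projectivization.submodule_mk, Submodule.span_singleton_le_iff_mem]
      intro h
      exact hwinner ((hperp w).1 h.1)⟩
  set y : V := z.rep with hydef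
  have hyne : y ≠ 0 := z.rep_nonzero
  have hzy : z = Projectivization.mk ℂ y hyne := (Projectivization.mk_rep z).symm
  have hyB : y ∈ (ℂ ∙ w₀) ⊔ A := by
    rw [Projectivization.submodule_eq, Submodule.span_singleton_le_iff_mem] at hz1
    exact hz1
  have hyA : y ∉ A := by
    intro h
    apply hz2
    rw [Projectivization.submodule_eq, Submodule.span_singleton_le_iff_mem]
    exact h
  have hyinner : ⟪w₀, y⟫_ℂ ≠ 0 := fun h => hyA ((key y hyB).1 h)
  -- the unit relating ρ r y and w
  rw [hzy, Projectivization.map_mk] at hz3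
  obtain ⟨c, hc⟩ := (Projectivization.mk_eq_mk_iff ℂ _ _ _ hwne).1 hz3
  have hc' : (ρ r) y = (c : ℂ) • w := by rw [← Units.smul_def]; exact hc.symm
  -- construct the candidate
  set x : V := y + (ρ r).symm ((c : ℂ) • u) with hxdef
  have hxu : (ρ r).symm ((c : ℂ) • u) ∈ Wᗮ := hsymmU r _ (Wᗮ.smul_mem _ huU)
  have hxinner : ⟪w₀, x⟫_ℂ = ⟪w₀, y⟫_ℂ := by
    rw [hxdef, inner_add_right, hxu w₀ hw₀W, add_zero]
  have hxne : x ≠ 0 := by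
    intro h
    apply hyinner
    rw [← hxinner, h, inner_zero_right]
  have hρx : (ρ r) x = (c : ℂ) • v := by
    rw [hxdef, map_add, LinearEquiv.apply_symm_apply, hc', hvwu, smul_add]
  refine ⟨(r, Projectivization.mk ℂ x hxne), ⟨⟨?_, ?_⟩, ?_⟩, ?_⟩
  · rw [Projectivization.submodule_mk, Submodule.span_singleton_le_iff_mem]
    exact Submodule.add_mem _ (Submodule.mem_sup_left hyB) (Submodule.mem_sup_right hxu)
  · rw [Projectivization.submodule_mk, Submodule.span_singleton_le_iff_mem]
    intro h
    exact hyinner (hxinner ▸ (hperp x).1 h)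
  · show Projectivization.map ((ρ r) : V →ₗ[ℂ] V) (ρ r).injective _ = p
    rw [Projectivization.map_mk]
    conv_rhs => rw [← p.mk_rep]
    rw [Projectivization.mk_eq_mk_iff]
    refine ⟨c, ?_⟩
    show c • v = _
    rw [Units.smul_def, ← hρx]
    rfl
  -- uniqueness
  · rintro ⟨r', z'⟩ ⟨⟨hz1', hz2'⟩, hz3'⟩
    set x' : V := z'.rep with hx'def
    have hx'ne : x' ≠ 0 := z'.rep_nonzero
    have hzx' : z' = Projectivization.mk ℂ x' hx'ne := (Projectivization.mk_rep z').symm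
    have hx'mem : x' ∈ (ℂ ∙ w₀) ⊔ A ⊔ Wᗮ := by
      rw [Projectivization.submodule_eq, Submodule.span_singleton_le_iff_mem] at hz1'
      exact hz1'
    have hx'inner : ⟪w₀, x'⟫_ℂ ≠ 0 := by
      intro h
      apply hz2'
      rw [Projectivization.submodule_eq, Submodule.span_singleton_le_iff_mem]
      exact (hperp x').2 h
    obtain ⟨y', hy'B, u', hu'U, hadd⟩ := Submodule.mem_sup.1 hx'mem
    rw [hzx', Projectivization.map_mk] at hz3'
    have hz3'' := hz3'
    conv_rhs at hz3'' => rw [← p.mk_rep]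
    obtain ⟨d, hd⟩ := (Projectivization.mk_eq_mk_iff ℂ _ _ _ hvne).1 hz3''
    -- hd : d • v = ρ r' x'
    -- decomposition: ρ r' y' = d • w
    have hr'y' : ((ρ r') : V →ₗ[ℂ] V) y' = (d : ℂ) • w := by
      have h1 : (ρ r') y' ∈ W := hmapW r' y' (hBW hy'B)
      have h2 : (ρ r') u' ∈ Wᗮ := hmapU r' u' hu'U
      have h3 : (ρ r') y' + (ρ r') u' = (d : ℂ) • w + (d : ℂ) • u := by
        rw [← map_add, hadd, ← smul_add, ← hvwu]
        exact ((Units.smul_def d v) ▸ hd).symm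
      have h4 : (ρ r') y' - (d : ℂ) • w = (d : ℂ) • u - (ρ r') u' := by
        linear_combination (norm := module) h3
      have h5 : (ρ r') y' - (d : ℂ) • w ∈ W ⊓ Wᗮ := by
        constructor
        · exact W.sub_mem h1 (W.smul_mem _ hwW)
        · rw [h4]; exact Wᗮ.sub_mem (Wᗮ.smul_mem _ huU) h2
      rw [W.inf_orthogonal_eq_bot, Submodule.mem_bot, sub_eq_zero] at h5
      exact h5
    have hu'inner : ⟪w₀, u'⟫_ℂ = 0 := hu'U w₀ hw₀W
    have hy'inner : ⟪w₀, y'⟫_ℂ ≠ 0 := by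
      intro h
      apply hx'inner
      rw [← hadd, inner_add_right, h, hu'inner, add_zero]
    have hy'ne : y' ≠ 0 := by
      intro h
      apply hy'inner
      rw [h, inner_zero_right]
    have h6 : ((r', Projectivization.mk ℂ y' hy'ne) : R × ℙ ℂ V) = (r, z) := by
      apply huniq
      refine ⟨⟨?_, ?_⟩, ?_⟩
      · rw [Projectivization.submodule_mk, Submodule.span_singleton_le_iff_mem]
        exact hy'B
      · rw [Projectivization.submodule_mk, Submodule.span_singleton_le_iff_mem]
        intro h
        exact hy'inner ((key y' hy'B).2 h)
      · show Projectivization.map ((ρ r') : V →ₗ[ℂ] V) (ρ r').injective _ =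
          Projectivization.mk ℂ w hwne
        rw [Projectivization.map_mk, Projectivization.mk_eq_mk_iff]
        exact ⟨d, hr'y'.symm⟩
    have hrr : r' = r := (Prod.ext_iff.1 h6).1
    subst hrr
    have hmapinj := Projectivization.map_injective ((ρ r') : V →ₗ[ℂ] V) (ρ r').injective
    have hz'eq : z' = Projectivization.mk ℂ x hxne := by
      apply hmapinj
      rw [hzx', Projectivization.map_mk]
      rw [hz3', Projectivization.map_mk]
      conv_lhs => rw [← p.mk_rep]
      rw [Projectivization.mk_eq_mk_iff]
      refine ⟨c⁻¹, ?_⟩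
      show c⁻¹ • _ = v
      rw [inv_smul_eq_iff, Units.smul_def, ← hρx]
      rfl
    rw [hz'eq]
end

section
/- Let β be a diagonalizable endomorphism of a finite-dimensional complex inner product space W with real eigenvalues and one-dimensional top eigenspace W_{β_0} = ℂw_0. Suppose a group element g satisfies lim_{t→+∞} exp(tβ) g exp(−tβ) = id in GL(W) (i.e., g ∈ R^{β−}). Then g·w_0 − w_0 lies in the sum of the eigenspaces with eigenvalue strictly less than β_0, and lim_{t→+∞} [exp(tβ) g · w_0] = [w_0] in ℙ(W). -/
open Filter Topology Module
open scoped LinearAlgebra.Projectivization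

/-- The quotient topology on a projectivization. -/
noncomputable instance {K V : Type*} [DivisionRing K] [AddCommGroup V] [Module K V]
    [TopologicalSpace V] : TopologicalSpace (ℙ K V) :=
  inferInstanceAs (TopologicalSpace (Quotient (projectivizationSetoid K V)))

private lemma exp_apply_eigen {W : Type*} [NormedAddCommGroup W] [InnerProductSpace ℂ W]
    [FiniteDimensional ℂ W] (A : W →L[ℂ] W) (c : ℂ) (v : W) (h : A v = c • v) :
    NormedSpace.exp A v = Complex.exp c • v := by
  have hpow : ∀ n : ℕ, (A ^ n) v = c ^ n • v := by
    intro n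
    induction n with
    | zero => simp
    | succ n ih =>
      rw [pow_succ, ContinuousLinearMap.mul_apply, h, map_smul, ih, smul_smul, pow_succ,
        mul_comm]
  have h1 := NormedSpace.exp_series_hasSum_exp' (𝕂 := ℂ) A
  have h2 := (ContinuousLinearMap.apply ℂ W v).hasSum h1
  simp only [ContinuousLinearMap.apply_apply, ContinuousLinearMap.smul_apply, hpow,
    smul_smul] at h2
  have h3 := (NormedSpace.exp_series_hasSum_exp' (𝕂 := ℂ) c).smul_const v
  simp only [smul_eq_mul] at h3
  rw [Complex.exp_eq_exp_ℂ]
  exact h2.unique h3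

/-- For `β` diagonalizable with strictly decreasing real eigenvalues, one-dimensional top
eigenspace `ℂ w₀`, and `g ∈ R^{β-}` (i.e. `exp(tβ) g exp(-tβ) → id` as `t → +∞`), the
vector `g·w₀ - w₀` lies in the sum of the lower eigenspaces, and the projected flow
satisfies `lim_{t→+∞} [exp(tβ)·(g·w₀)] = [w₀]` in `ℙ(W)`. -/
theorem stmt19 {W : Type*} [NormedAddCommGroup W] [InnerProductSpace ℂ W]
    [FiniteDimensional ℂ W]
    (β : W →L[ℂ] W) {m : ℕ} (μ : Fin (m + 1) → ℝ) (hμ : StrictAnti μ)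
    (hspan : ⨆ j, End.eigenspace (β : W →ₗ[ℂ] W) (μ j : ℂ) = ⊤)
    (w₀ : W) (hw₀ : w₀ ≠ 0)
    (htop : End.eigenspace (β : W →ₗ[ℂ] W) (μ 0 : ℂ) = Submodule.span ℂ {w₀})
    (g : W ≃L[ℂ] W)
    (hg : Tendsto
      (fun t : ℝ => NormedSpace.exp ((t : ℂ) • β) * (g : W →L[ℂ] W) *
        NormedSpace.exp ((-t : ℂ) • β))
      atTop (𝓝 1))
    (hnz : ∀ t : ℝ, NormedSpace.exp ((t : ℂ) • β) (g w₀) ≠ 0) :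
    g w₀ - w₀ ∈ (⨆ j : {j : Fin (m + 1) // j ≠ 0}, End.eigenspace (β : W →ₗ[ℂ] W) (μ j : ℂ)) ∧
    Tendsto (fun t : ℝ => Projectivization.mk ℂ (NormedSpace.exp ((t : ℂ) • β) (g w₀)) (hnz t))
      atTop (𝓝 (Projectivization.mk ℂ w₀ hw₀)) := by
  classical
  -- decompose g w₀ into eigencomponents
  have hmem : g w₀ ∈ ⨆ j, End.eigenspace (β : W →ₗ[ℂ] W) (μ j : ℂ) := by
    rw [hspan]; trivial
  obtain ⟨f, hf, hsum⟩ := (Submodule.mem_iSup_iff_exists_finsupp _ _).1 hmem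
  have hsum' : ∑ j, f j = g w₀ := by
    rw [← hsum]; exact (Finsupp.sum_fintype f (fun _ x => x) (fun _ => rfl)).symm
  -- eigenvector action of the flow
  have heig : ∀ (z : ℂ) (j), NormedSpace.exp (z • β) (f j)
      = Complex.exp (z * (μ j : ℂ)) • f j := by
    intro z j
    apply exp_apply_eigen
    have hb : β (f j) = (μ j : ℂ) • f j := End.mem_eigenspace_iff.1 (hf j)
    rw [ContinuousLinearMap.smul_apply, hb, smul_smul]
  have hw₀mem : w₀ ∈ End.eigenspace (β : W →ₗ[ℂ] W) (μ 0 : ℂ) := by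
    rw [htop]; exact Submodule.mem_span_singleton_self w₀
  have heigw : ∀ z : ℂ, NormedSpace.exp (z • β) w₀ = Complex.exp (z * (μ 0 : ℂ)) • w₀ := by
    intro z
    apply exp_apply_eigen
    have hb : β w₀ = (μ 0 : ℂ) • w₀ := End.mem_eigenspace_iff.1 hw₀mem
    rw [ContinuousLinearMap.smul_apply, hb, smul_smul]
  set F : ℝ → W := fun t =>
    Complex.exp ((-t : ℂ) * (μ 0 : ℂ)) • NormedSpace.exp ((t : ℂ) • β) (g w₀) with hF
  -- Limit A : F → w₀ from the contraction hypothesis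
  have hFA : Tendsto F atTop (𝓝 w₀) := by
    have hc := ((ContinuousLinearMap.apply ℂ W w₀).continuous.tendsto 1).comp hg
    simp only [Function.comp_def, ContinuousLinearMap.apply_apply,
      ContinuousLinearMap.mul_apply, ContinuousLinearMap.one_apply] at hc
    refine hc.congr fun t => ?_
    rw [heigw ((-t : ℂ)), map_smul, map_smul, hF]
    rfl
  -- Limit B : F → f 0
  have hFt : ∀ t : ℝ, F t = ∑ j, Complex.exp ((t : ℂ) * ((μ j : ℂ) - (μ 0 : ℂ))) • f j := by
    intro t
    rw [hF]
    dsimp only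
    rw [← hsum', map_sum, Finset.smul_sum]
    refine Finset.sum_congr rfl fun j _ => ?_
    rw [heig, smul_smul, ← Complex.exp_add]
    congr 1
    ring_nf
  have hFB : Tendsto F atTop (𝓝 (f 0)) := by
    have h0 : (f 0 : W) = ∑ j : Fin (m + 1), (if j = 0 then f 0 else 0) := by simp
    rw [h0]
    rw [funext hFt]
    apply tendsto_finset_sum
    intro j _
    by_cases hj : j = 0
    · subst hj
      simp only [if_pos rfl, sub_self, mul_zero, Complex.exp_zero, one_smul]
      exact tendsto_const_nhds
    · rw [if_neg hj]
      have hneg : μ j - μ 0 < 0 := by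
        have := hμ (show (0 : Fin (m + 1)) < j from Fin.pos_of_ne_zero hj)
        linarith
      have hcoef : Tendsto (fun t : ℝ => Complex.exp ((t : ℂ) * ((μ j : ℂ) - (μ 0 : ℂ))))
          atTop (𝓝 0) := by
        have heq : ∀ t : ℝ, Complex.exp ((t : ℂ) * ((μ j : ℂ) - (μ 0 : ℂ)))
            = ((Real.exp (t * (μ j - μ 0)) : ℝ) : ℂ) := by
          intro t
          rw [Complex.ofReal_exp]
          norm_cast
        simp only [heq]
        have hre : Tendsto (fun t : ℝ => Real.exp (t * (μ j - μ 0))) atTop (𝓝 0) :=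
          Real.tendsto_exp_atBot.comp (tendsto_id.atTop_mul_const_of_neg hneg)
        have := (Complex.continuous_ofReal.tendsto 0).comp hre
        simpa [Function.comp_def] using this
      simpa using hcoef.smul_const (f j)
  have h0eq : f 0 = w₀ := tendsto_nhds_unique hFB hFA
  constructor
  · have hdiff : g w₀ - w₀ = ∑ j ∈ Finset.univ.erase 0, f j := by
      rw [← hsum', ← h0eq, ← Finset.add_sum_erase _ f (Finset.mem_univ 0)]
      abel
    rw [hdiff]
    apply Submodule.sum_mem
    intro j hj
    have hj0 : j ≠ 0 := Finset.ne_of_mem_erase hj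
    exact Submodule.mem_iSup_of_mem (⟨j, hj0⟩ : {j : Fin (m + 1) // j ≠ 0}) (hf j)
  · have hFne : ∀ t : ℝ, F t ≠ 0 := fun t => smul_ne_zero (Complex.exp_ne_zero _) (hnz t)
    have hmk : ∀ t : ℝ, Projectivization.mk ℂ (NormedSpace.exp ((t : ℂ) • β) (g w₀)) (hnz t)
        = Projectivization.mk ℂ (F t) (hFne t) := by
      intro t
      symm
      rw [Projectivization.mk_eq_mk_iff]
      refine ⟨Units.mk0 _ (Complex.exp_ne_zero ((-t : ℂ) * (μ 0 : ℂ))), ?_⟩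
      rw [hF]
      rfl
    rw [funext hmk]
    have hsub : Tendsto (fun t => (⟨F t, hFne t⟩ : {v : W // v ≠ 0})) atTop
        (𝓝 (⟨w₀, hw₀⟩ : {v : W // v ≠ 0})) := by
      rw [tendsto_subtype_rng]
      exact hFA
    exact (continuous_quotient_mk'.tendsto _).comp hsub
end
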